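/- Let p be a prime, n a positive integer, and C_1, C_2 codes of length n over Z_p with C_1 ⊆ C_2 ⊆ C_1^⊥. If C is a self-orthogonal code of length n over Z_{p^2} with π(C) = ι^{-1}(C) = C_1, then there exists a unique self-orthogonal code C' of length n over Z_{p^2} such that C ⊆ C', π(C') = C_1, and ι^{-1}(C') = C_2. -/

import Mathlib

open scoped BigOperators

set_option maxHeartbeats 1000000

namespace Paper

/-- Self-orthogonality of a set of vectors w.r.t. the standard inner product. -/
def sorth {m : ℕ} {ι : Type} [Fintype ι] (S : Set (ι → ZMod m)) : Prop :=
  ∀ x ∈ S, ∀ y ∈ S, ∑ i, x i * y i = 0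

/-- The dual (as a set) of a set of vectors w.r.t. the standard inner product. -/
def dualSet {m : ℕ} {ι : Type} [Fintype ι] (S : Set (ι → ZMod m)) : Set (ι → ZMod m) :=
  {x | ∀ y ∈ S, ∑ i, x i * y i = 0}

/-- A set of vectors is doubly even if every element has Hamming weight divisible by 4. -/
def doublyEven {m : ℕ} {ι : Type} [Fintype ι] (S : Set (ι → ZMod m)) : Prop :=
  ∀ x ∈ S, 4 ∣ (Finset.univ.filter fun i => x i ≠ 0).card

/-- Coordinatewise reduction map `(Z_{p^2})^ι → (Z_p)^ι`. -/
def res (p : ℕ) [Fact p.Prime] {ι : Type} (v : ι → ZMod (p ^ 2)) : ι → ZMod p :=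
  fun i => ZMod.castHom (dvd_pow_self p (by norm_num)) (ZMod p) (v i)

/-- The injection `(Z_p)^ι → (Z_{p^2})^ι` induced by `Z_p ≅ pZ_{p^2} ⊆ Z_{p^2}`. -/
def iot (p : ℕ) {ι : Type} (v : ι → ZMod p) : ι → ZMod (p ^ 2) :=
  fun i => (p : ZMod (p ^ 2)) * (ZMod.cast (v i))

/-- Coordinatewise reduction map `(Z_4)^ι → (Z_2)^ι`. -/
def res4 {ι : Type} (v : ι → ZMod 4) : ι → ZMod 2 :=
  fun i => ZMod.castHom (by norm_num : (2:ℕ) ∣ 4) (ZMod 2) (v i)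

/-- The injection `(Z_2)^ι → (Z_4)^ι`. -/
def iot4 {ι : Type} (v : ι → ZMod 2) : ι → ZMod 4 :=
  fun i => (2 : ZMod 4) * (ZMod.cast (v i))

/-- Euclidean weight on `Z_4`. -/
def ewt (x : ZMod 4) : ℕ := if x = 0 then 0 else if x = 2 then 4 else 1

/-- A quaternary code is even if every codeword has Euclidean weight divisible by 8. -/
def evenCode {ι : Type} [Fintype ι] (S : Set (ι → ZMod 4)) : Prop :=
  ∀ x ∈ S, 8 ∣ ∑ i, ewt (x i)

/-- The code over `Z_q` generated by the rows of an integer matrix. -/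
def intRowSpan (q : ℕ) {κ ι : Type} (G : Matrix κ ι ℤ) :
    Submodule (ZMod q) (ι → ZMod q) :=
  Submodule.span (ZMod q) (Set.range fun i => fun c => ((G i c : ℤ) : ZMod q))

/-- The Gaussian binomial coefficient `[n choose k]_p`. -/
def gauss (p n k : ℕ) : ℚ :=
  ∏ i ∈ Finset.range k, ((p : ℚ) ^ n - (p : ℚ) ^ i) / ((p : ℚ) ^ k - (p : ℚ) ^ i)

/-!
The code is forced to be `C' = C + ι(C₂)`. It is self-orthogonal because `x · ι(v) = p (x · v)`
only depends on `π(x) · v`, which vanishes as `C₂ ⊆ C₁^⊥`, while `ι(u) · ι(v)` carries the factor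
`p² = 0`. Adding `ι(C₂)` leaves the residue code unchanged, and its torsion code is `C₂` because
that of `C` is `C₁ ⊆ C₂`. Conversely, `ker π = ι((ℤ/p)ⁿ)`, so any `C' ⊇ C` with `π(C') = π(C)`
satisfies `C' = C + (C' ∩ ker π) = C + ι(ι⁻¹ C')`.
-/

section Scalar

variable {p : ℕ}

theorem exists_eq_natCast_mul_of_castHom_eq_zero {x : ZMod (p ^ 2)}
    (hx : ZMod.castHom (dvd_pow_self p two_ne_zero) (ZMod p) x = 0) :
    ∃ y, x = p * y := by
  obtain ⟨k, rfl⟩ := ZMod.intCast_surjective x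
  rw [map_intCast, ZMod.intCast_zmod_eq_zero_iff_dvd] at hx
  obtain ⟨j, rfl⟩ := hx
  exact ⟨j, by push_cast; rfl⟩

theorem natCast_mul_natCast_eq_zero : (p : ZMod (p ^ 2)) * p = 0 := by
  rw [← sq, ← Nat.cast_pow, ZMod.natCast_self]

theorem natCast_mul_eq_zero_of_castHom_eq_zero {x : ZMod (p ^ 2)}
    (hx : ZMod.castHom (dvd_pow_self p two_ne_zero) (ZMod p) x = 0) :
    (p : ZMod (p ^ 2)) * x = 0 := by
  obtain ⟨y, rfl⟩ := exists_eq_natCast_mul_of_castHom_eq_zero hx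
  rw [← mul_assoc, natCast_mul_natCast_eq_zero, zero_mul]

theorem natCast_mul_eq_natCast_mul_of_castHom_eq {x y : ZMod (p ^ 2)}
    (h : ZMod.castHom (dvd_pow_self p two_ne_zero) (ZMod p) x =
      ZMod.castHom (dvd_pow_self p two_ne_zero) (ZMod p) y) :
    (p : ZMod (p ^ 2)) * x = p * y := by
  rw [← sub_eq_zero, ← mul_sub]
  exact natCast_mul_eq_zero_of_castHom_eq_zero (by rw [map_sub, h, sub_self])

end Scalar

section Embedding

variable {p : ℕ} {ι : Type}

theorem iot_apply (v : ι → ZMod p) (i : ι) : iot p v i = p * ZMod.cast (v i) := rfl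

theorem castHom_cast (a : ZMod p) :
    ZMod.castHom (dvd_pow_self p two_ne_zero) (ZMod p) (ZMod.cast a : ZMod (p ^ 2)) = a :=
  ZMod.ringHom_map_cast _ a

theorem iot_add (u v : ι → ZMod p) : iot p (u + v) = iot p u + iot p v := by
  funext i
  simp only [iot_apply, Pi.add_apply, ← mul_add]
  exact natCast_mul_eq_natCast_mul_of_castHom_eq (by simp only [map_add, castHom_cast])

theorem iot_sub (u v : ι → ZMod p) : iot p (u - v) = iot p u - iot p v := by
  funext i
  simp only [iot_apply, Pi.sub_apply, ← mul_sub]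
  exact natCast_mul_eq_natCast_mul_of_castHom_eq (by simp only [map_sub, castHom_cast])

theorem iot_zero : iot p (0 : ι → ZMod p) = 0 := by
  simpa only [sub_self] using iot_sub (p := p) (0 : ι → ZMod p) 0

theorem smul_iot (a : ZMod (p ^ 2)) (v : ι → ZMod p) :
    a • iot p v = iot p (ZMod.castHom (dvd_pow_self p two_ne_zero) (ZMod p) a • v) := by
  funext i
  simp only [iot_apply, Pi.smul_apply, smul_eq_mul, mul_left_comm a]
  exact natCast_mul_eq_natCast_mul_of_castHom_eq (by simp only [map_mul, castHom_cast])

theorem sum_iot_mul_iot [Fintype ι] (u v : ι → ZMod p) : ∑ i, iot p u i * iot p v i = 0 :=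
  Finset.sum_eq_zero fun i _ => by
    rw [iot_apply, iot_apply, mul_mul_mul_comm, natCast_mul_natCast_eq_zero, zero_mul]

def iotSubmodule (D : Submodule (ZMod p) (ι → ZMod p)) :
    Submodule (ZMod (p ^ 2)) (ι → ZMod (p ^ 2)) where
  carrier := iot p '' D
  add_mem' := by
    rintro _ _ ⟨u, hu, rfl⟩ ⟨v, hv, rfl⟩
    exact ⟨u + v, D.add_mem hu hv, iot_add u v⟩
  zero_mem' := ⟨0, D.zero_mem, iot_zero⟩
  smul_mem' := by
    rintro a _ ⟨v, hv, rfl⟩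
    exact ⟨_, D.smul_mem _ hv, (smul_iot a v).symm⟩

theorem mem_iotSubmodule {D : Submodule (ZMod p) (ι → ZMod p)} {x : ι → ZMod (p ^ 2)} :
    x ∈ iotSubmodule D ↔ ∃ v ∈ D, iot p v = x := Iff.rfl

end Embedding

section Reduction

variable {p : ℕ} [Fact p.Prime] {ι : Type}

theorem res_apply (x : ι → ZMod (p ^ 2)) (i : ι) :
    res p x i = ZMod.castHom (dvd_pow_self p two_ne_zero) (ZMod p) (x i) := rfl

theorem res_add (x y : ι → ZMod (p ^ 2)) : res p (x + y) = res p x + res p y :=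
  funext fun _ => map_add _ _ _

theorem res_sub (x y : ι → ZMod (p ^ 2)) : res p (x - y) = res p x - res p y :=
  funext fun _ => map_sub _ _ _

theorem res_iot (v : ι → ZMod p) : res p (iot p v) = 0 := by
  funext i
  rw [res_apply, iot_apply, map_mul, map_natCast, ZMod.natCast_self, zero_mul, Pi.zero_apply]

theorem exists_iot_eq_of_res_eq_zero {x : ι → ZMod (p ^ 2)} (hx : res p x = 0) :
    ∃ w, iot p w = x := by
  choose y hy using fun i => exists_eq_natCast_mul_of_castHom_eq_zero (congrFun hx i)
  refine ⟨res p y, funext fun i => ?_⟩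
  rw [iot_apply, hy, res_apply]
  exact natCast_mul_eq_natCast_mul_of_castHom_eq (castHom_cast _)

theorem sum_mul_iot_eq_zero [Fintype ι] {x : ι → ZMod (p ^ 2)} {v : ι → ZMod p}
    (h : ∑ i, res p x i * v i = 0) : ∑ i, x i * iot p v i = 0 := by
  simp only [iot_apply, mul_left_comm (x _), ← Finset.mul_sum]
  refine natCast_mul_eq_zero_of_castHom_eq_zero ?_
  simpa only [map_sum, map_mul, castHom_cast, res_apply] using h

end Reduction

section Extension

variable {p : ℕ} [Fact p.Prime] {ι : Type}
  {C : Submodule (ZMod (p ^ 2)) (ι → ZMod (p ^ 2))} {D : Submodule (ZMod p) (ι → ZMod p)}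

theorem sorth_sup_iotSubmodule [Fintype ι] (hC : sorth (C : Set (ι → ZMod (p ^ 2))))
    (hD : (D : Set (ι → ZMod p)) ⊆ dualSet (res p '' C)) :
    sorth ((C ⊔ iotSubmodule D : Submodule _ _) : Set (ι → ZMod (p ^ 2))) := by
  have cross : ∀ c ∈ C, ∀ v ∈ D, ∑ i, c i * iot p v i = 0 := fun c hc v hv =>
    sum_mul_iot_eq_zero <| by
      simpa only [mul_comm (v _)] using hD hv (res p c) ⟨c, hc, rfl⟩
  intro x hx y hy
  obtain ⟨c, hc, _, hu', rfl⟩ := Submodule.mem_sup.mp hx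
  obtain ⟨d, hd, _, hv', rfl⟩ := Submodule.mem_sup.mp hy
  obtain ⟨u, hu, rfl⟩ := mem_iotSubmodule.mp hu'
  obtain ⟨v, hv, rfl⟩ := mem_iotSubmodule.mp hv'
  calc ∑ i, (c i + iot p u i) * (d i + iot p v i)
      = (∑ i, c i * d i) + (∑ i, c i * iot p v i) + (∑ i, d i * iot p u i)
          + ∑ i, iot p u i * iot p v i := by
        simp only [← Finset.sum_add_distrib]
        exact Finset.sum_congr rfl fun i _ => by ring
    _ = 0 := by rw [hC c hc d hd, cross c hc v hv, cross d hd u hu, sum_iot_mul_iot]; ring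

theorem image_res_sup_iotSubmodule :
    res p '' ((C ⊔ iotSubmodule D : Submodule _ _) : Set (ι → ZMod (p ^ 2))) = res p '' C := by
  refine (Set.image_subset_iff.mpr fun x hx => ?_).antisymm
    (Set.image_mono (SetLike.coe_mono le_sup_left))
  obtain ⟨c, hc, _, hv', rfl⟩ := Submodule.mem_sup.mp hx
  obtain ⟨v, -, rfl⟩ := mem_iotSubmodule.mp hv'
  exact ⟨c, hc, by rw [res_add, res_iot, add_zero]⟩

theorem preimage_iot_sup_iotSubmodule (hCD : iot p ⁻¹' C ⊆ (D : Set (ι → ZMod p))) :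
    iot p ⁻¹' ((C ⊔ iotSubmodule D : Submodule _ _) : Set (ι → ZMod (p ^ 2))) = D := by
  refine Set.Subset.antisymm (fun w hw => ?_) fun v hv =>
    Submodule.mem_sup_right (mem_iotSubmodule.mpr ⟨v, hv, rfl⟩)
  obtain ⟨c, hc, _, hv', hw⟩ := Submodule.mem_sup.mp hw
  obtain ⟨v, hv, rfl⟩ := mem_iotSubmodule.mp hv'
  have hwv : w - v ∈ D :=
    hCD (show iot p (w - v) ∈ C by rwa [iot_sub, ← hw, add_sub_cancel_right])
  exact sub_add_cancel w v ▸ D.add_mem hwv hv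

theorem eq_sup_iotSubmodule {C' : Submodule (ZMod (p ^ 2)) (ι → ZMod (p ^ 2))} (hCC' : C ≤ C')
    (hres : res p '' (C' : Set (ι → ZMod (p ^ 2))) = res p '' C)
    (htor : iot p ⁻¹' C' = (D : Set (ι → ZMod p))) :
    C' = C ⊔ iotSubmodule D := by
  refine le_antisymm (fun x hx => ?_) (sup_le hCC' fun _ hx => ?_)
  · obtain ⟨c, hc, hcx⟩ : res p x ∈ res p '' C := hres ▸ ⟨x, hx, rfl⟩
    obtain ⟨w, hw⟩ := exists_iot_eq_of_res_eq_zero (by rw [res_sub, hcx, sub_self] :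
      res p (x - c) = 0)
    have hwD : w ∈ (D : Set (ι → ZMod p)) :=
      htor ▸ show iot p w ∈ C' by rw [hw]; exact C'.sub_mem hx (hCC' hc)
    exact Submodule.mem_sup.mpr ⟨c, hc, iot p w, mem_iotSubmodule.mpr ⟨w, hwD, rfl⟩,
      by rw [hw, add_sub_cancel]⟩
  · obtain ⟨v, hv, rfl⟩ := mem_iotSubmodule.mp hx
    exact (htor ▸ hv : v ∈ iot p ⁻¹' C')

end Extension

theorem stmt6_general (p n : ℕ) [Fact p.Prime]
    (C1 C2 : Submodule (ZMod p) (Fin n → ZMod p))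
    (h12 : C1 ≤ C2)
    (h2d : (C2 : Set (Fin n → ZMod p)) ⊆ dualSet (C1 : Set (Fin n → ZMod p)))
    (C : Submodule (ZMod (p ^ 2)) (Fin n → ZMod (p ^ 2)))
    (hso : sorth (C : Set (Fin n → ZMod (p ^ 2))))
    (hres : res p '' (C : Set (Fin n → ZMod (p ^ 2))) = (C1 : Set (Fin n → ZMod p)))
    (htor : iot p ⁻¹' (C : Set (Fin n → ZMod (p ^ 2))) = (C1 : Set (Fin n → ZMod p))) :
    ∃! C' : Submodule (ZMod (p ^ 2)) (Fin n → ZMod (p ^ 2)),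
      sorth (C' : Set (Fin n → ZMod (p ^ 2))) ∧ C ≤ C' ∧
      res p '' (C' : Set (Fin n → ZMod (p ^ 2))) = (C1 : Set (Fin n → ZMod p)) ∧
      iot p ⁻¹' (C' : Set (Fin n → ZMod (p ^ 2))) = (C2 : Set (Fin n → ZMod p)) := by
  refine ⟨C ⊔ iotSubmodule C2, ⟨sorth_sup_iotSubmodule hso (hres ▸ h2d), le_sup_left,
    image_res_sup_iotSubmodule.trans hres,
    preimage_iot_sup_iotSubmodule (htor ▸ SetLike.coe_mono h12)⟩, ?_⟩
  rintro C' ⟨-, hCC', hres', htor'⟩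
  exact eq_sup_iotSubmodule hCC' (hres'.trans hres.symm) htor'

/-- if `C₁ ⊆ C₂ ⊆ C₁^⊥` and `C` is a self-orthogonal code over `Z_{p^2}` with
`π(C) = ι⁻¹(C) = C₁`, then there is a unique self-orthogonal code `C'` with `C ⊆ C'`,
`π(C') = C₁` and `ι⁻¹(C') = C₂`. -/
theorem stmt6 (p n : ℕ) [Fact p.Prime] (hn : 0 < n)
    (C1 C2 : Submodule (ZMod p) (Fin n → ZMod p))
    (h12 : C1 ≤ C2)
    (h2d : (C2 : Set (Fin n → ZMod p)) ⊆ dualSet (C1 : Set (Fin n → ZMod p)))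
    (C : Submodule (ZMod (p ^ 2)) (Fin n → ZMod (p ^ 2)))
    (hso : sorth (C : Set (Fin n → ZMod (p ^ 2))))
    (hres : res p '' (C : Set (Fin n → ZMod (p ^ 2))) = (C1 : Set (Fin n → ZMod p)))
    (htor : iot p ⁻¹' (C : Set (Fin n → ZMod (p ^ 2))) = (C1 : Set (Fin n → ZMod p))) :
    ∃! C' : Submodule (ZMod (p ^ 2)) (Fin n → ZMod (p ^ 2)),
      sorth (C' : Set (Fin n → ZMod (p ^ 2))) ∧ C ≤ C' ∧
      res p '' (C' : Set (Fin n → ZMod (p ^ 2))) = (C1 : Set (Fin n → ZMod p)) ∧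
      iot p ⁻¹' (C' : Set (Fin n → ZMod (p ^ 2))) = (C2 : Set (Fin n → ZMod p)) :=
  stmt6_general p n C1 C2 h12 h2d C hso hres htor

end Paper
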